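/- arXiv:2503.09777 — 2 statements merged into one kernel-verified Lean document; each statement's English description precedes it below -/
import Mathlib

section
/- Let Θ ∈ ℂ^{2N×2N} be a symmetric (Θ = Θᵀ) and unitary (lossless) S-parameter matrix with invertible (2,1) block. Then its T-parameter matrix G = 𝒯(Θ) satisfies the complex-conjugate persymmetry G = J G* J with J = blkantidiag(I_N, I_N). -/
open Matrix

/-- A symmetric and unitary S-parameter matrix has a complex-conjugate
persymmetric T-parameter matrix. -/
theorem symmetric_S_implies_persymmetric_T (N : ℕ)
    (Θ11 Θ12 Θ21 Θ22 : Matrix (Fin N) (Fin N) ℂ)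
    (hSym : (fromBlocks Θ11 Θ12 Θ21 Θ22) = (fromBlocks Θ11 Θ12 Θ21 Θ22)ᵀ)
    (hU : (fromBlocks Θ11 Θ12 Θ21 Θ22)ᴴ * fromBlocks Θ11 Θ12 Θ21 Θ22 = 1)
    (h21 : IsUnit Θ21) :
    (fromBlocks (Θ12 - Θ11 * Θ21⁻¹ * Θ22) (Θ11 * Θ21⁻¹) (-(Θ21⁻¹ * Θ22)) (Θ21⁻¹)) =
      (fromBlocks 0 1 1 0) *
      (fromBlocks (Θ12 - Θ11 * Θ21⁻¹ * Θ22) (Θ11 * Θ21⁻¹) (-(Θ21⁻¹ * Θ22)) (Θ21⁻¹)).map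
        (starRingEnd ℂ) *
      (fromBlocks 0 1 1 0) := by
  set c := (starRingEnd ℂ) with hc
  -- the conjugate transpose equals the entrywise conjugate, by symmetry
  have hΘH : (fromBlocks Θ11 Θ12 Θ21 Θ22)ᴴ
      = ((fromBlocks Θ11 Θ12 Θ21 Θ22)ᵀ).map ⇑c := rfl
  have hct : (fromBlocks Θ11 Θ12 Θ21 Θ22)ᴴ =
      fromBlocks (Θ11.map ⇑c) (Θ12.map ⇑c) (Θ21.map ⇑c) (Θ22.map ⇑c) := by
    rw [hΘH, ← hSym, fromBlocks_map]
  rw [hct] at hU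
  -- Θ̄ Θ = 1  and  Θ Θ̄ = 1
  have hU' : fromBlocks Θ11 Θ12 Θ21 Θ22 *
      fromBlocks (Θ11.map ⇑c) (Θ12.map ⇑c) (Θ21.map ⇑c) (Θ22.map ⇑c) = 1 :=
    mul_eq_one_comm.mp hU
  rw [fromBlocks_multiply, ← fromBlocks_one] at hU hU'
  -- block equations
  have e1 := congrArg Matrix.toBlocks₁₁ hU'
  have e3 := congrArg Matrix.toBlocks₂₁ hU'
  have f3 := congrArg Matrix.toBlocks₂₁ hU
  simp only [Matrix.toBlocks_fromBlocks₁₁, Matrix.toBlocks_fromBlocks₂₁] at e1 e3 f3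
  -- e1 : Θ11 * Θ11.map c + Θ12 * Θ21.map c = 1
  -- e3 : Θ21 * Θ11.map c + Θ22 * Θ21.map c = 0
  -- f3 : Θ21.map c * Θ11 + Θ22.map c * Θ21 = 0
  -- invertibility facts
  have hdet : IsUnit Θ21.det := (isUnit_iff_isUnit_det Θ21).mp h21
  have hmul : Θ21 * Θ21⁻¹ = 1 := mul_nonsing_inv Θ21 hdet
  have hmul' : Θ21⁻¹ * Θ21 = 1 := nonsing_inv_mul Θ21 hdet
  have hc21 : IsUnit (Θ21.map ⇑c) := h21.map ((starRingEnd ℂ).mapMatrix)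
  have hcinv : (Θ21.map ⇑c)⁻¹ = Θ21⁻¹.map ⇑c := by
    refine inv_eq_left_inv ?_
    rw [← Matrix.map_mul, hmul', Matrix.map_one ⇑c (map_zero c) (map_one c)]
  have hcmul : Θ21.map ⇑c * (Θ21.map ⇑c)⁻¹ = 1 :=
    mul_nonsing_inv _ ((isUnit_iff_isUnit_det _).mp hc21)
  -- helper facts about entrywise conjugation
  have ccid : ∀ M : Matrix (Fin N) (Fin N) ℂ, (M.map ⇑c).map ⇑c = M := by
    intro M; ext i j; simp [hc, Matrix.map_apply]
  have hnegmap : ∀ M : Matrix (Fin N) (Fin N) ℂ, (-M).map ⇑c = -(M.map ⇑c) := by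
    intro M; ext i j; simp [hc, Matrix.map_apply]
  -- key identity for the (1,1) block
  have G1 : Θ12 - Θ11 * Θ21⁻¹ * Θ22 = Θ21⁻¹.map ⇑c := by
    rw [← hcinv]
    refine (inv_eq_left_inv ?_).symm
    have h3 : Θ22 * Θ21.map ⇑c = -(Θ21 * Θ11.map ⇑c) := by
      rw [eq_neg_iff_add_eq_zero, add_comm]; exact e3
    have key : Θ11 * Θ21⁻¹ * Θ22 * Θ21.map ⇑c = -(Θ11 * Θ11.map ⇑c) := by
      rw [Matrix.mul_assoc (Θ11 * Θ21⁻¹), h3, Matrix.mul_neg, ← Matrix.mul_assoc,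
        Matrix.mul_assoc Θ11, hmul', Matrix.mul_one]
    rw [Matrix.sub_mul, key, sub_neg_eq_add, add_comm]
    exact e1
  -- key identity for the (1,2) block
  have G2 : Θ11 * Θ21⁻¹ = -((Θ21⁻¹ * Θ22).map ⇑c) := by
    refine hc21.mul_left_cancel ?_
    have hf3 : Θ21.map ⇑c * Θ11 = -(Θ22.map ⇑c * Θ21) :=
      eq_neg_iff_add_eq_zero.mpr f3
    calc Θ21.map ⇑c * (Θ11 * Θ21⁻¹)
        = -(Θ22.map ⇑c * (Θ21 * Θ21⁻¹)) := by
          rw [← Matrix.mul_assoc, hf3, Matrix.neg_mul, Matrix.mul_assoc]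
      _ = -(Θ22.map ⇑c) := by rw [hmul, Matrix.mul_one]
      _ = Θ21.map ⇑c * -((Θ21⁻¹ * Θ22).map ⇑c) := by
          rw [Matrix.map_mul, ← hcinv, Matrix.mul_neg, ← Matrix.mul_assoc, hcmul,
            Matrix.one_mul]
  -- conjugates of the above
  have G3 : -(Θ21⁻¹ * Θ22) = (Θ11 * Θ21⁻¹).map ⇑c := by
    have h := congrArg (fun M : Matrix (Fin N) (Fin N) ℂ => M.map ⇑c) G2
    rw [hnegmap, ccid] at h
    exact h.symm
  have G4 : Θ21⁻¹ = (Θ12 - Θ11 * Θ21⁻¹ * Θ22).map ⇑c := by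
    have h := congrArg (fun M : Matrix (Fin N) (Fin N) ℂ => M.map ⇑c) G1
    rw [ccid] at h
    exact h.symm
  -- assemble
  rw [fromBlocks_map, fromBlocks_multiply, fromBlocks_multiply]
  simp only [Matrix.zero_mul, Matrix.one_mul, Matrix.mul_zero, Matrix.mul_one,
    add_zero, zero_add]
  rw [hnegmap]
  conv_rhs => rw [← G4, ← G1, ← G2, ← G3]
end

section
/- Let P, Q ∈ ℂ^{2N×2N} be block S-parameter matrices with N×N blocks, and suppose I − Q_11 P_22 and I − P_22 Q_11 are invertible and P_21, Q_21, and R_21 = Q_21 (I − P_22 Q_11)⁻¹ P_21 are invertible, where R = 𝒮(P, Q) is the cascade S-parameter matrix with blocks R_11 = P_11 + P_12 (I − Q_11 P_22)⁻¹ Q_11 P_21, R_12 = P_12 (I − Q_11 P_22)⁻¹ Q_12, R_21 = Q_21 (I − P_22 Q_11)⁻¹ P_21, R_22 = Q_22 + Q_21 (I − P_22 Q_11)⁻¹ P_22 Q_12. Then 𝒯(R) = 𝒯(P) 𝒯(Q), i.e., the T-parameter matrix of the cascade equals the product of the individual T-parameter matrices. -/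
/-!
Read an S-matrix as the map from incident waves a = (a₁, a₂) to reflected waves b = S a.
Then 𝒯(S) is the unique matrix sending the port-2 waves (a₂, b₂) to the port-1 waves (b₁, a₁):
unique because a ↦ (a₂, b₂) is invertible once S₂₁ is. In the cascade R = 𝒮(P, Q) the port-2
waves of P are the port-1 waves of Q, and solving the junction with (1 - P₂₂Q₁₁)⁻¹ makes every
wave a linear function of the outer incident waves. So 𝒯(P) 𝒯(Q) sends the port-2 waves of R to
its port-1 waves, i.e. it is 𝒯(R).
-/

open Matrix

namespace Matrix

variable {n α : Type*} [Fintype n] [DecidableEq n] [CommRing α]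

theorem inv_one_sub_eq_one_add_mul_inv {a : Matrix n n α} (h : IsUnit (1 - a)) :
    (1 - a)⁻¹ = 1 + a * (1 - a)⁻¹ := by
  have h' := mul_nonsing_inv _ ((isUnit_iff_isUnit_det _).mp h)
  rwa [Matrix.sub_mul, Matrix.one_mul, sub_eq_iff_eq_add] at h'

theorem inv_one_sub_eq_one_add_inv_mul {a : Matrix n n α} (h : IsUnit (1 - a)) :
    (1 - a)⁻¹ = 1 + (1 - a)⁻¹ * a := by
  have h' := nonsing_inv_mul _ ((isUnit_iff_isUnit_det _).mp h)
  rwa [Matrix.mul_sub, Matrix.mul_one, sub_eq_iff_eq_add] at h'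

theorem inv_one_sub_mul_eq_one_add {a b : Matrix n n α} (h : IsUnit (1 - b * a)) :
    (1 - a * b)⁻¹ = 1 + a * (1 - b * a)⁻¹ * b := by
  apply inv_eq_right_inv
  calc (1 - a * b) * (1 + a * (1 - b * a)⁻¹ * b)
      = 1 - a * b + a * ((1 - b * a) * (1 - b * a)⁻¹) * b := by noncomm_ring
    _ = 1 := by rw [mul_nonsing_inv _ ((isUnit_iff_isUnit_det _).mp h)]; noncomm_ring

theorem inv_one_sub_mul_mul_comm {a b : Matrix n n α} (h : IsUnit (1 - b * a)) :
    (1 - a * b)⁻¹ * a = a * (1 - b * a)⁻¹ := by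
  conv_rhs => rw [inv_one_sub_eq_one_add_inv_mul h]
  rw [inv_one_sub_mul_eq_one_add h]
  noncomm_ring

end Matrix

namespace SParameters

variable {n α : Type*} [Fintype n] [DecidableEq n] [CommRing α]

noncomputable def tMatrix (s11 s12 s21 s22 : Matrix n n α) : Matrix (n ⊕ n) (n ⊕ n) α :=
  fromBlocks (s12 - s11 * s21⁻¹ * s22) (s11 * s21⁻¹) (-(s21⁻¹ * s22)) s21⁻¹

/-- With b = S a, `port1Waves s11 s12` sends a to (b₁, a₁) and `port2Waves s21 s22` sends a
to (a₂, b₂). -/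
def port1Waves (s11 s12 : Matrix n n α) : Matrix (n ⊕ n) (n ⊕ n) α :=
  fromBlocks s11 s12 1 0

def port2Waves (s21 s22 : Matrix n n α) : Matrix (n ⊕ n) (n ⊕ n) α :=
  fromBlocks 0 1 s21 s22

theorem tMatrix_mul_port2Waves {s11 s12 s21 s22 : Matrix n n α} (h : IsUnit s21) :
    tMatrix s11 s12 s21 s22 * port2Waves s21 s22 = port1Waves s11 s12 := by
  have h' := nonsing_inv_mul _ ((isUnit_iff_isUnit_det _).mp h)
  simp [tMatrix, port1Waves, port2Waves, fromBlocks_multiply, Matrix.mul_assoc, h']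

theorem eq_tMatrix_of_mul_port2Waves {s11 s12 s21 s22 : Matrix n n α}
    {T : Matrix (n ⊕ n) (n ⊕ n) α} (h : IsUnit s21)
    (hT : T * port2Waves s21 s22 = port1Waves s11 s12) :
    T = tMatrix s11 s12 s21 s22 := by
  have h' := mul_nonsing_inv _ ((isUnit_iff_isUnit_det _).mp h)
  set M : Matrix (n ⊕ n) (n ⊕ n) α := fromBlocks (-(s21⁻¹ * s22)) s21⁻¹ 1 0
  have hM : port2Waves s21 s22 * M = 1 := by
    simp [M, port2Waves, fromBlocks_multiply, ← Matrix.mul_assoc, h']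
  calc T = T * port2Waves s21 s22 * M := by rw [Matrix.mul_assoc, hM, Matrix.mul_one]
    _ = tMatrix s11 s12 s21 s22 := by
      rw [hT]
      simp [M, tMatrix, port1Waves, fromBlocks_multiply, Matrix.mul_assoc, neg_add_eq_sub]

/-- The incident waves of Q, resp. of P, in the cascade, as functions of the outer incident
waves (a₁ of P, a₂ of Q). -/
noncomputable def cascadeIncidentQ (p21 p22 q11 q12 : Matrix n n α) : Matrix (n ⊕ n) (n ⊕ n) α :=
  fromBlocks ((1 - p22 * q11)⁻¹ * p21) ((1 - p22 * q11)⁻¹ * p22 * q12) 0 1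

noncomputable def cascadeIncidentP (p21 p22 q11 q12 : Matrix n n α) : Matrix (n ⊕ n) (n ⊕ n) α :=
  fromBlocks 1 0 (q11 * (1 - p22 * q11)⁻¹ * p21) ((1 - q11 * p22)⁻¹ * q12)

variable {p11 p12 p21 p22 q11 q12 q21 q22 : Matrix n n α}

theorem port2Waves_cascade :
    port2Waves (q21 * (1 - p22 * q11)⁻¹ * p21) (q22 + q21 * (1 - p22 * q11)⁻¹ * p22 * q12) =
      port2Waves q21 q22 * cascadeIncidentQ p21 p22 q11 q12 := by
  simp [port2Waves, cascadeIncidentQ, fromBlocks_multiply, Matrix.mul_assoc, add_comm]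

theorem port1Waves_mul_cascadeIncidentQ (h : IsUnit (1 - p22 * q11)) :
    port1Waves q11 q12 * cascadeIncidentQ p21 p22 q11 q12 =
      port2Waves p21 p22 * cascadeIncidentP p21 p22 q11 q12 := by
  have hD := inv_one_sub_eq_one_add_mul_inv h
  simp only [port1Waves, port2Waves, cascadeIncidentQ, cascadeIncidentP, fromBlocks_multiply,
    inv_one_sub_mul_eq_one_add h]
  congr 1
  · noncomm_ring
  · noncomm_ring
  · conv_lhs => rw [hD]
    noncomm_ring
  · conv_lhs => rw [hD]
    noncomm_ring

theorem port1Waves_mul_cascadeIncidentP (h : IsUnit (1 - p22 * q11)) :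
    port1Waves p11 p12 * cascadeIncidentP p21 p22 q11 q12 =
      port1Waves (p11 + p12 * (1 - q11 * p22)⁻¹ * q11 * p21) (p12 * (1 - q11 * p22)⁻¹ * q12) := by
  simp [port1Waves, cascadeIncidentP, fromBlocks_multiply, Matrix.mul_assoc,
    inv_one_sub_mul_mul_comm h]

end SParameters

open SParameters

theorem T_of_cascade_eq_mul_general (N : ℕ)
    (p11 p12 p21 p22 q11 q12 q21 q22 : Matrix (Fin N) (Fin N) ℂ)
    (h2 : IsUnit (1 - p22 * q11))
    (hp : IsUnit p21) (hq : IsUnit q21) :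
    (fromBlocks
      ((p12 * (1 - q11 * p22)⁻¹ * q12) -
        (p11 + p12 * (1 - q11 * p22)⁻¹ * q11 * p21) *
          (q21 * (1 - p22 * q11)⁻¹ * p21)⁻¹ *
          (q22 + q21 * (1 - p22 * q11)⁻¹ * p22 * q12))
      ((p11 + p12 * (1 - q11 * p22)⁻¹ * q11 * p21) *
        (q21 * (1 - p22 * q11)⁻¹ * p21)⁻¹)
      (-((q21 * (1 - p22 * q11)⁻¹ * p21)⁻¹ *
        (q22 + q21 * (1 - p22 * q11)⁻¹ * p22 * q12)))
      ((q21 * (1 - p22 * q11)⁻¹ * p21)⁻¹)) =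
    (fromBlocks (p12 - p11 * p21⁻¹ * p22) (p11 * p21⁻¹) (-(p21⁻¹ * p22)) (p21⁻¹)) *
    (fromBlocks (q12 - q11 * q21⁻¹ * q22) (q11 * q21⁻¹) (-(q21⁻¹ * q22)) (q21⁻¹)) := by
  have hr : IsUnit (q21 * (1 - p22 * q11)⁻¹ * p21) :=
    (hq.mul (isUnit_nonsing_inv_iff.mpr h2)).mul hp
  refine (eq_tMatrix_of_mul_port2Waves hr ?_).symm
  calc tMatrix p11 p12 p21 p22 * tMatrix q11 q12 q21 q22 * port2Waves _ _
      = tMatrix p11 p12 p21 p22 * (tMatrix q11 q12 q21 q22 * port2Waves q21 q22) *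
          cascadeIncidentQ p21 p22 q11 q12 := by
        rw [port2Waves_cascade]
        simp only [Matrix.mul_assoc]
    _ = tMatrix p11 p12 p21 p22 * (port2Waves p21 p22 * cascadeIncidentP p21 p22 q11 q12) := by
        rw [tMatrix_mul_port2Waves hq, Matrix.mul_assoc, port1Waves_mul_cascadeIncidentQ h2]
    _ = port1Waves p11 p12 * cascadeIncidentP p21 p22 q11 q12 := by
        rw [← Matrix.mul_assoc, tMatrix_mul_port2Waves hp]
    _ = _ := port1Waves_mul_cascadeIncidentP h2

/-- The T-parameter matrix of a cascade (Redheffer star product) equals the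
product of the individual T-parameter matrices. -/
theorem T_of_cascade_eq_mul (N : ℕ)
    (p11 p12 p21 p22 q11 q12 q21 q22 : Matrix (Fin N) (Fin N) ℂ)
    (h1 : IsUnit (1 - q11 * p22)) (h2 : IsUnit (1 - p22 * q11))
    (hp : IsUnit p21) (hq : IsUnit q21)
    (hr : IsUnit (q21 * (1 - p22 * q11)⁻¹ * p21)) :
    (fromBlocks
      ((p12 * (1 - q11 * p22)⁻¹ * q12) -
        (p11 + p12 * (1 - q11 * p22)⁻¹ * q11 * p21) *
          (q21 * (1 - p22 * q11)⁻¹ * p21)⁻¹ *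
          (q22 + q21 * (1 - p22 * q11)⁻¹ * p22 * q12))
      ((p11 + p12 * (1 - q11 * p22)⁻¹ * q11 * p21) *
        (q21 * (1 - p22 * q11)⁻¹ * p21)⁻¹)
      (-((q21 * (1 - p22 * q11)⁻¹ * p21)⁻¹ *
        (q22 + q21 * (1 - p22 * q11)⁻¹ * p22 * q12)))
      ((q21 * (1 - p22 * q11)⁻¹ * p21)⁻¹)) =
    (fromBlocks (p12 - p11 * p21⁻¹ * p22) (p11 * p21⁻¹) (-(p21⁻¹ * p22)) (p21⁻¹)) *
    (fromBlocks (q12 - q11 * q21⁻¹ * q22) (q11 * q21⁻¹) (-(q21⁻¹ * q22)) (q21⁻¹)) :=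
  T_of_cascade_eq_mul_general N p11 p12 p21 p22 q11 q12 q21 q22 h2 hp hq
end
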